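/- Fix integers m, n ≥ 0. A pair (γ₁, γ₂) ∈ P(m) × P(n) lies in the image of the map μ† : DP(m,n) → P(m) × P(n) if and only if (γ₁, γ₂) is a relevant pair; moreover, when (γ₁, γ₂) is relevant, the fiber (μ†)⁻¹(γ₁, γ₂) contains a relevant decorated bipartition, i.e. it meets RDP(m,n). -/

import Mathlib

/-- A decorated pair of non-negative integers: `AB j` encodes the pair `(j+1, j)`
(i.e. type `(k, k-1)` with `k = j+1`), `BA j` encodes `(j, j+1)` (type `(k-1, k)`),
`P j` encodes `(j+1, j+1)⁺` and `M j` encodes `(j+1, j+1)⁻`. -/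
inductive DPair : Type
  | AB : ℕ → DPair
  | BA : ℕ → DPair
  | P : ℕ → DPair
  | M : ℕ → DPair
deriving DecidableEq

namespace DPair

/-- The first coordinate of a decorated pair. -/
def a : DPair → ℕ
  | AB j => j + 1
  | BA j => j
  | P j => j + 1
  | M j => j + 1

/-- The second coordinate of a decorated pair. -/
def b : DPair → ℕ
  | AB j => j
  | BA j => j + 1
  | P j => j + 1
  | M j => j + 1

end DPair

/-- `γ` is a decorated bipartition of `(m, n)`: the first coordinates sum to `m`
and the second coordinates sum to `n`. -/
def IsDP (m n : ℕ) (γ : Multiset DPair) : Prop :=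
  (γ.map DPair.a).sum = m ∧ (γ.map DPair.b).sum = n

/-- `γ` is relevant: for no `k ≥ 1` do both a pair of type `(k, k-1)` and a pair of
type `(k-1, k)` occur in `γ`. -/
def IsRelevantDP (γ : Multiset DPair) : Prop :=
  ∀ j : ℕ, ¬(DPair.AB j ∈ γ ∧ DPair.BA j ∈ γ)

/-- The first component `μ₁†` of the moment map: the multiset of first coordinates,
with zero parts discarded. -/
def muA (γ : Multiset DPair) : Multiset ℕ :=
  (γ.map DPair.a).filter (0 < ·)

/-- The second component `μ₂†` of the moment map. -/
def muB (γ : Multiset DPair) : Multiset ℕ :=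
  (γ.map DPair.b).filter (0 < ·)

/-- The `i`-th entry (0-indexed) of a multiset of naturals sorted in decreasing order,
with the value `0` for indices beyond the length (i.e. zero parts appended). -/
def nthPart (s : Multiset ℕ) (i : ℕ) : ℕ :=
  ((s.sort (· ≤ ·)).reverse).getD i 0

/-- A pair of partitions (given by their multisets of parts) is relevant if, after
sorting decreasingly and appending zero parts, corresponding parts differ by at most 1. -/
def RelevantPair (p q : Multiset ℕ) : Prop :=
  ∀ i : ℕ, nthPart p i ≤ nthPart q i + 1 ∧ nthPart q i ≤ nthPart p i + 1

/-! The `i`-th largest part of a multiset of naturals exceeds `v` iff more than `i` parts exceed `v`.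
As the two coordinates of a decorated pair differ by at most one, this count shows that the sorted
first and second coordinates of any `γ` differ by at most one. Conversely, the `i`-th parts
`(pᵢ, qᵢ)` of a relevant pair are the coordinates of a decorated pair, and the multiset of these
pairs is relevant: `(pᵢ, qᵢ) = (j + 1, j)` and `(pᵢ', qᵢ') = (j, j + 1)` contradict `q` being
non-increasing if `i ≤ i'` and `p` being non-increasing if `i' ≤ i`. -/

theorem List.lt_getD_iff_lt_countP {l : List ℕ} (hl : l.Pairwise (· ≥ ·)) {i v : ℕ} :
    v < l.getD i 0 ↔ i < l.countP (v < ·) := by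
  induction l generalizing i with
  | nil => simp
  | cons x l ih =>
    rw [List.pairwise_cons] at hl
    have tail_small (hx : ¬v < x) : l.countP (v < ·) = 0 :=
      List.countP_eq_zero.mpr fun y hy => by have := hl.1 y hy; simp; omega
    cases i with
    | zero => by_cases hx : v < x <;> simp [hx, tail_small]
    | succ i =>
      rw [List.getD_cons_succ, ih hl.2, List.countP_cons]
      by_cases hx : v < x <;> simp [hx, tail_small]

theorem List.map_getD_range {l : List ℕ} {r : ℕ} (hr : l.length ≤ r) :
    (List.range r).map (l.getD · 0) = l ++ List.replicate (r - l.length) 0 := by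
  refine List.ext_getElem (by simp; omega) fun k hk _ => ?_
  simp only [List.getElem_map, List.getElem_range, List.getElem_append, List.getElem_replicate]
  split_ifs with h <;> simp [List.getD_eq_getElem?_getD, h]

theorem Multiset.sum_filter_pos (s : Multiset ℕ) : (s.filter (0 < ·)).sum = s.sum := by
  have hzero : (s.filter (¬0 < ·)).sum = 0 :=
    Multiset.sum_eq_zero fun x hx => by simpa using Multiset.of_mem_filter hx
  conv_rhs => rw [← Multiset.filter_add_not (0 < ·) s, Multiset.sum_add, hzero, add_zero]

theorem lt_nthPart_iff {s : Multiset ℕ} {i v : ℕ} :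
    v < nthPart s i ↔ i < s.countP (v < ·) := by
  have hsorted : ((s.sort (· ≤ ·)).reverse).Pairwise (· ≥ ·) :=
    List.pairwise_reverse.mpr (s.pairwise_sort _)
  rw [nthPart, List.lt_getD_iff_lt_countP hsorted, ← Multiset.coe_countP, Multiset.coe_reverse,
    Multiset.sort_eq]

theorem nthPart_antitone (s : Multiset ℕ) : Antitone (nthPart s) := by
  intro j i hji
  by_contra! h
  exact (lt_nthPart_iff.mpr (hji.trans_lt (lt_nthPart_iff.mp h))).false

theorem pos_nthPart {s : Multiset ℕ} (hs : ∀ x ∈ s, 0 < x) {i : ℕ} (hi : i < Multiset.card s) :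
    0 < nthPart s i := by
  rwa [lt_nthPart_iff, Multiset.countP_eq_card.mpr hs]

theorem nthPart_filter_pos (s : Multiset ℕ) : nthPart (s.filter (0 < ·)) = nthPart s := by
  funext i
  refine eq_of_forall_lt_iff fun v => ?_
  rw [lt_nthPart_iff, lt_nthPart_iff, Multiset.countP_filter]
  exact Iff.of_eq (congrArg _ (Multiset.countP_congr rfl fun x _ => by simp; omega))

theorem nthPart_map_le_add_one {α : Type*} {s : Multiset α} {f g : α → ℕ}
    (hfg : ∀ x, f x ≤ g x + 1) (i : ℕ) :
    nthPart (s.map f) i ≤ nthPart (s.map g) i + 1 := by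
  by_contra! h
  set w := nthPart (s.map g) i
  have hcount : (s.map f).countP (w + 1 < ·) ≤ (s.map g).countP (w < ·) := by
    rw [Multiset.countP_map, Multiset.countP_map]
    exact Multiset.card_le_card <|
      Multiset.monotone_filter_right _ fun x (hx : w + 1 < f x) => by have := hfg x; omega
  exact (lt_nthPart_iff.mpr ((lt_nthPart_iff.mp h).trans_le hcount)).false

theorem map_nthPart_range {s : Multiset ℕ} {r : ℕ} (hr : Multiset.card s ≤ r) :
    (Multiset.range r).map (nthPart s) = s + Multiset.replicate (r - Multiset.card s) 0 := by
  set l := (s.sort (· ≤ ·)).reverse with hl_def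
  have hl : (l : Multiset ℕ) = s := by rw [hl_def, Multiset.coe_reverse, Multiset.sort_eq]
  have hlen : l.length = Multiset.card s := by rw [← Multiset.coe_card, hl]
  rw [Multiset.range, Multiset.map_coe, show nthPart s = (l.getD · 0) from rfl,
    List.map_getD_range (hlen ▸ hr), ← Multiset.coe_add, hl, Multiset.coe_replicate, hlen]

theorem filter_pos_map_nthPart_range {s : Multiset ℕ} (hs : ∀ x ∈ s, 0 < x) {r : ℕ}
    (hr : Multiset.card s ≤ r) : ((Multiset.range r).map (nthPart s)).filter (0 < ·) = s := by
  rw [map_nthPart_range hr, Multiset.filter_add, Multiset.filter_eq_self.mpr hs]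
  simp [Multiset.mem_replicate]

namespace DPair

theorem a_le_b_add_one (d : DPair) : d.a ≤ d.b + 1 := by
  cases d <;> simp [a, b]; omega

theorem b_le_a_add_one (d : DPair) : d.b ≤ d.a + 1 := by
  cases d <;> simp [a, b]; omega

/-- The value at `(0, 0)`, which is not the pair of coordinates of any decorated pair, is junk. -/
def ofParts (x y : ℕ) : DPair :=
  if x = y + 1 then AB y else if y = x + 1 then BA x else P (x - 1)

variable {x y : ℕ}

theorem a_ofParts (hyx : y ≤ x + 1) (hpos : 0 < x ∨ 0 < y) :
    (ofParts x y).a = x := by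
  unfold ofParts
  split_ifs <;> simp only [a] <;> omega

theorem b_ofParts (hxy : x ≤ y + 1) (hyx : y ≤ x + 1) (hpos : 0 < x ∨ 0 < y) :
    (ofParts x y).b = y := by
  unfold ofParts
  split_ifs <;> simp only [b] <;> omega

end DPair

theorem relevantPair_muA_muB (γ : Multiset DPair) : RelevantPair (muA γ) (muB γ) := by
  intro i
  rw [muA, muB, nthPart_filter_pos, nthPart_filter_pos]
  exact ⟨nthPart_map_le_add_one (fun d => d.a_le_b_add_one) i,
    nthPart_map_le_add_one (fun d => d.b_le_a_add_one) i⟩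

theorem exists_isRelevantDP_of_relevantPair {p q : Multiset ℕ} (hp : ∀ x ∈ p, 0 < x)
    (hq : ∀ x ∈ q, 0 < x) (h : RelevantPair p q) :
    ∃ γ : Multiset DPair, IsRelevantDP γ ∧ muA γ = p ∧ muB γ = q := by
  set r := max (Multiset.card p) (Multiset.card q)
  set d : ℕ → DPair := fun i => DPair.ofParts (nthPart p i) (nthPart q i)
  have hpos (i : ℕ) (hi : i ∈ Multiset.range r) : 0 < nthPart p i ∨ 0 < nthPart q i := by
    rcases lt_max_iff.mp (Multiset.mem_range.mp hi) with hi | hi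
    exacts [.inl (pos_nthPart hp hi), .inr (pos_nthPart hq hi)]
  have ha (i) (hi : i ∈ Multiset.range r) : (DPair.a ∘ d) i = nthPart p i :=
    DPair.a_ofParts (h i).2 (hpos i hi)
  have hb (i) (hi : i ∈ Multiset.range r) : (DPair.b ∘ d) i = nthPart q i :=
    DPair.b_ofParts (h i).1 (h i).2 (hpos i hi)
  refine ⟨(Multiset.range r).map d, ?_, ?_, ?_⟩
  · rintro j ⟨hAB, hBA⟩
    obtain ⟨i, hi, hdi⟩ := Multiset.mem_map.mp hAB
    obtain ⟨i', hi', hdi'⟩ := Multiset.mem_map.mp hBA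
    have hpi : nthPart p i = j + 1 := (ha i hi).symm.trans (congrArg DPair.a hdi)
    have hqi : nthPart q i = j := (hb i hi).symm.trans (congrArg DPair.b hdi)
    have hpi' : nthPart p i' = j := (ha i' hi').symm.trans (congrArg DPair.a hdi')
    have hqi' : nthPart q i' = j + 1 := (hb i' hi').symm.trans (congrArg DPair.b hdi')
    rcases le_total i i' with hii | hii
    · have := nthPart_antitone q hii; omega
    · have := nthPart_antitone p hii; omega
  · rw [muA, Multiset.map_map, Multiset.map_congr rfl ha]
    exact filter_pos_map_nthPart_range hp (le_max_left _ _)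
  · rw [muB, Multiset.map_map, Multiset.map_congr rfl hb]
    exact filter_pos_map_nthPart_range hq (le_max_right _ _)

theorem isDP_of_muA_muB {m n : ℕ} {γ : Multiset DPair} {γ₁ : Nat.Partition m}
    {γ₂ : Nat.Partition n} (hA : muA γ = γ₁.parts) (hB : muB γ = γ₂.parts) : IsDP m n γ := by
  constructor
  · rw [← Multiset.sum_filter_pos, ← γ₁.parts_sum, ← hA, muA]
  · rw [← Multiset.sum_filter_pos, ← γ₂.parts_sum, ← hB, muB]

/-- A pair `(γ₁, γ₂) ∈ P(m) × P(n)` lies in the image of `μ† : DP(m,n) → P(m) × P(n)`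
iff it is a relevant pair; moreover when it is relevant, the fiber meets `RDP(m,n)`. -/
theorem mem_image_mu_iff_relevantPair {m n : ℕ}
    (γ₁ : Nat.Partition m) (γ₂ : Nat.Partition n) :
    ((∃ γ : Multiset DPair, IsDP m n γ ∧ muA γ = γ₁.parts ∧ muB γ = γ₂.parts) ↔
      RelevantPair γ₁.parts γ₂.parts) ∧
    (RelevantPair γ₁.parts γ₂.parts →
      ∃ γ : Multiset DPair, IsDP m n γ ∧ IsRelevantDP γ ∧
        muA γ = γ₁.parts ∧ muB γ = γ₂.parts) := by
  have relevant_fiber (h : RelevantPair γ₁.parts γ₂.parts) :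
      ∃ γ : Multiset DPair, IsDP m n γ ∧ IsRelevantDP γ ∧
        muA γ = γ₁.parts ∧ muB γ = γ₂.parts := by
    obtain ⟨γ, hrel, hA, hB⟩ :=
      exists_isRelevantDP_of_relevantPair (fun _ => γ₁.parts_pos) (fun _ => γ₂.parts_pos) h
    exact ⟨γ, isDP_of_muA_muB hA hB, hrel, hA, hB⟩
  refine ⟨⟨?_, fun h => ?_⟩, relevant_fiber⟩
  · rintro ⟨γ, -, hA, hB⟩
    exact hA ▸ hB ▸ relevantPair_muA_muB γ
  · obtain ⟨γ, hdp, -, hA, hB⟩ := relevant_fiber h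
    exact ⟨γ, hdp, hA, hB⟩
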